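/- arXiv:1907.09722 — 3 statements merged into one kernel-verified Lean document; each statement's English description precedes it below -/
import Mathlib

section
/- A finite simple graph G has no edges if and only if its chromatic symmetric function X_G lies in the subalgebra Γ = ℚ[p_1, p_3, p_5, ...] of the algebra of symmetric functions generated by odd power sum symmetric functions. -/
open Classical in
/-- The power sum symmetric function `p_k = ∑_i x_i^k`, as a formal power series in the
variables `x_i`, `i : ℕ`: the coefficient of the monomial `x_i^k` is `1` and all other
coefficients vanish. -/
noncomputable def pp (k : ℕ) : MvPowerSeries ℕ ℚ :=
  fun d => if ∃ i : ℕ, d = Finsupp.single i k then 1 else 0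

/-- The chromatic symmetric function `X_G = ∑_κ x_{κ(v₁)} ⋯ x_{κ(vₙ)}` of a finite simple
graph `G`, the sum being over all proper colorings `κ : V → ℕ`: the coefficient of a monomial
`∏ x_i^{d_i}` is the number of proper colorings using each color `i` exactly `d_i` times. -/
noncomputable def csf {V : Type} [Fintype V] (G : SimpleGraph V) : MvPowerSeries ℕ ℚ :=
  fun d => (Set.ncard {κ : V → ℕ |
    (∀ u v, G.Adj u v → κ u ≠ κ v) ∧ ∀ i : ℕ, Set.ncard {v | κ v = i} = d i} : ℚ)

/-- The subalgebra `Γ = ℚ[p₁, p₃, p₅, …]` of symmetric functions generated by the odd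
power sums. -/
noncomputable def Gam : Subalgebra ℚ (MvPowerSeries ℕ ℚ) :=
  Algebra.adjoin ℚ {f | ∃ k : ℕ, Odd k ∧ f = pp k}

noncomputable def cnt (W : Type) [Fintype W] (d : ℕ →₀ ℕ) : ℕ :=
  Nat.card {κ : W → ℕ // ∑ v, Finsupp.single (κ v) 1 = d}

lemma mem_support_of_eq {W : Type} [Fintype W] {κ : W → ℕ} {d : ℕ →₀ ℕ}
    (h : ∑ v, Finsupp.single (κ v) 1 = d) (v : W) : κ v ∈ d.support := by
  rw [Finsupp.mem_support_iff, ← h, Finsupp.finset_sum_apply]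
  intro h0
  have := Finset.sum_eq_zero_iff.mp h0 v (Finset.mem_univ v)
  simp at this

instance cnt_finite (W : Type) [Fintype W] (d : ℕ →₀ ℕ) :
    Finite {κ : W → ℕ // ∑ v, Finsupp.single (κ v) 1 = d} := by
  have : Finite {κ : W → ℕ // ∀ v, κ v ∈ d.support} := by
    exact Finite.of_injective (fun κ => (fun v => (⟨κ.1 v, κ.2 v⟩ : d.support)))
      (by intro a b hab; ext v; exact congrArg Subtype.val (congrFun hab v))
  exact Finite.of_injective
    (fun κ => (⟨κ.1, fun v => mem_support_of_eq κ.2 v⟩ : {κ : W → ℕ // ∀ v, κ v ∈ d.support}))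
    (by intro a b hab; ext v; exact congrFun (congrArg Subtype.val hab) v)

lemma nat_card_sigma {ι : Type*} [Fintype ι] (B : ι → Type*) [∀ i, Finite (B i)] :
    Nat.card (Σ i, B i) = ∑ i, Nat.card (B i) := by
  have : ∀ i, Fintype (B i) := fun i => Fintype.ofFinite _
  simp [Nat.card_eq_fintype_card]

lemma cnt_zero (d : ℕ →₀ ℕ) : cnt (Fin 0) d = if d = 0 then 1 else 0 := by
  unfold cnt
  split
  · subst ‹d = 0›
    rw [Nat.card_eq_one_iff_unique]
    constructor
    · constructor
      intro a b; ext v; exact absurd v.2 (by exact Fin.elim0 v)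
    · exact ⟨⟨finZeroElim, by simp⟩⟩
  · rw [Nat.card_eq_zero]
    left
    constructor
    intro κ
    exact ‹¬ d = 0› (by simpa using κ.2.symm)

lemma cnt_succ (m : ℕ) (d : ℕ →₀ ℕ) :
    cnt (Fin (m+1)) d = ∑ i ∈ d.support, cnt (Fin m) (d - Finsupp.single i 1) := by
  classical
  have e : {κ : Fin (m+1) → ℕ // ∑ v, Finsupp.single (κ v) 1 = d} ≃
      (Σ i : d.support, {κ : Fin m → ℕ // ∑ v, Finsupp.single (κ v) 1 = d - Finsupp.single (i : ℕ) 1}) := by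
    refine ⟨fun κ => ⟨⟨κ.1 (Fin.last m), mem_support_of_eq κ.2 _⟩,
      ⟨fun j => κ.1 j.castSucc, ?_⟩⟩, fun p => ⟨Fin.snoc (p.2.1) (p.1 : ℕ), ?_⟩, ?_, ?_⟩
    · have h := κ.2
      rw [Fin.sum_univ_castSucc] at h
      exact eq_tsub_of_add_eq h
    · have hle : Finsupp.single (p.1 : ℕ) 1 ≤ d := by
        rw [Finsupp.single_le_iff]
        have := p.1.2
        rw [Finsupp.mem_support_iff] at this
        omega
      rw [Fin.sum_univ_castSucc]
      simp only [Fin.snoc_castSucc, Fin.snoc_last]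
      rw [p.2.2, tsub_add_cancel_of_le hle]
    · intro κ
      ext v
      · exact Fin.lastCases (by simp) (fun j => by simp) v
    · intro p
      refine Sigma.subtype_ext (Subtype.ext ?_) ?_
      · simp
      · funext j
        simp
  rw [cnt, Nat.card_congr e, nat_card_sigma]
  rw [← Finset.sum_coe_sort d.support (fun i => cnt (Fin m) (d - Finsupp.single i 1))]
  rfl

lemma mul_pp_one (f : MvPowerSeries ℕ ℚ) (d : ℕ →₀ ℕ) :
    (f * pp 1) d = ∑ i ∈ d.support, f (d - Finsupp.single i 1) := by
  classical
  have key : (f * pp 1) d = ∑ p ∈ Finset.HasAntidiagonal.antidiagonal d, f p.1 * pp 1 p.2 :=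
    MvPowerSeries.coeff_mul (n := d) (φ := f) (ψ := pp 1)
  rw [key]
  rw [Finset.sum_congr rfl (fun p _ => by
    rw [show pp 1 p.2 = if ∃ i : ℕ, p.2 = Finsupp.single i 1 then 1 else 0 from rfl,
      mul_ite, mul_one, mul_zero])]
  rw [Finset.sum_ite, Finset.sum_const, smul_zero, add_zero]
  have huniq : ∀ (p : (ℕ →₀ ℕ) × (ℕ →₀ ℕ)) (hex : ∃ i : ℕ, p.2 = Finsupp.single i 1)
      (i : ℕ), p.2 = Finsupp.single i 1 → i = hex.choose := by
    intro p hex i hi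
    exact Finsupp.single_left_injective one_ne_zero (hi.symm.trans hex.choose_spec)
  refine Finset.sum_nbij' (fun p => if h : ∃ i : ℕ, p.2 = Finsupp.single i 1 then h.choose else 0)
    (fun i => (d - Finsupp.single i 1, Finsupp.single i 1)) ?_ ?_ ?_ ?_ ?_
  · intro p hp
    simp only [Finset.mem_filter, Finset.HasAntidiagonal.mem_antidiagonal] at hp
    obtain ⟨hsum, hex⟩ := hp
    obtain ⟨i, hi⟩ := hex
    have hex : ∃ i : ℕ, p.2 = Finsupp.single i 1 := ⟨i, hi⟩
    simp only [dif_pos hex]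
    rw [← huniq p hex i hi]
    rw [Finsupp.mem_support_iff, ← hsum, Finsupp.add_apply, hi, Finsupp.single_apply, if_pos rfl]
    omega
  · intro i hi
    simp only [Finset.mem_filter, Finset.HasAntidiagonal.mem_antidiagonal]
    rw [Finsupp.mem_support_iff] at hi
    refine ⟨tsub_add_cancel_of_le (by rw [Finsupp.single_le_iff]; omega), ⟨i, rfl⟩⟩
  · intro p hp
    simp only [Finset.mem_filter, Finset.HasAntidiagonal.mem_antidiagonal] at hp
    obtain ⟨hsum, hex⟩ := hp
    obtain ⟨i, hi⟩ := hex
    have hex : ∃ i : ℕ, p.2 = Finsupp.single i 1 := ⟨i, hi⟩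
    simp only [dif_pos hex]
    rw [← huniq p hex i hi]
    have h1 : d - Finsupp.single i 1 = p.1 := by
      rw [← hsum, hi]; exact add_tsub_cancel_right _ _
    rw [h1, ← hi]
  · intro i hi
    have hex : ∃ j : ℕ, (Finsupp.single i 1 : ℕ →₀ ℕ) = Finsupp.single j 1 := ⟨i, rfl⟩
    simp only [dif_pos hex]
    exact (huniq (d - Finsupp.single i 1, Finsupp.single i 1) hex i rfl).symm
  · intro p hp
    simp only [Finset.mem_filter, Finset.HasAntidiagonal.mem_antidiagonal] at hp
    obtain ⟨hsum, hex⟩ := hp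
    obtain ⟨i, hi⟩ := hex
    have hex : ∃ i : ℕ, p.2 = Finsupp.single i 1 := ⟨i, hi⟩
    simp only [dif_pos hex]
    rw [← huniq p hex i hi]
    have h1 : d - Finsupp.single i 1 = p.1 := by
      rw [← hsum, hi]; exact add_tsub_cancel_right _ _
    rw [h1]

lemma pp_one_pow (m : ℕ) (d : ℕ →₀ ℕ) : (pp 1 ^ m) d = (cnt (Fin m) d : ℚ) := by
  induction m generalizing d with
  | zero =>
    rw [pow_zero, cnt_zero]
    have : (1 : MvPowerSeries ℕ ℚ) d = if d = 0 then 1 else 0 :=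
      MvPowerSeries.coeff_one d (R := ℚ)
    rw [this]
    split <;> simp
  | succ m ih =>
    rw [pow_succ, mul_pp_one, cnt_succ]
    rw [Nat.cast_sum]
    exact Finset.sum_congr rfl (fun i _ => ih _)

/-- indicator finsupp of a finset -/
noncomputable def ind (S : Finset ℕ) : ℕ →₀ ℕ := ∑ i ∈ S, Finsupp.single i 1

lemma ind_apply (S : Finset ℕ) (j : ℕ) : ind S j = if j ∈ S then 1 else 0 := by
  classical
  rw [ind, Finsupp.finset_sum_apply]
  rw [Finset.sum_congr rfl (fun i _ => Finsupp.single_apply (a := i) (b := (1:ℕ)) (a' := j))]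
  simp [Finset.sum_ite_eq]

lemma ind_support (S : Finset ℕ) : (ind S).support = S := by
  ext j; rw [Finsupp.mem_support_iff, ind_apply]; split <;> simp_all

lemma ind_sub_single {S : Finset ℕ} {i : ℕ} (hi : i ∈ S) :
    ind S - Finsupp.single i 1 = ind (S.erase i) := by
  classical
  ext j
  rw [Finsupp.tsub_apply, ind_apply, ind_apply, Finsupp.single_apply]
  by_cases h : j = i
  · subst h; simp [hi]
  · simp [Finset.mem_erase, h, (show ¬ i = j from fun hh => h hh.symm)]

lemma cnt_ind (m : ℕ) (S : Finset ℕ) :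
    cnt (Fin m) (ind S) = if m = S.card then m.factorial else 0 := by
  classical
  induction m generalizing S with
  | zero =>
    rw [cnt_zero]
    have h0 : ind S = 0 ↔ S = ∅ := by
      constructor
      · intro h
        ext j
        have := DFunLike.congr_fun h j
        rw [ind_apply] at this
        simp only [Finset.notMem_empty, iff_false]
        intro hj; simp [hj] at this
      · intro h; subst h; ext j; rw [ind_apply]; simp
    by_cases h : ind S = 0
    · rw [if_pos h]
      have : S = ∅ := h0.mp h
      simp [this]
    · rw [if_neg h]
      have : ¬ S = ∅ := fun hh => h (h0.mpr hh)
      have : S.card ≠ 0 := by simpa [Finset.card_eq_zero]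
      simp [this.symm]
  | succ m ih =>
    rw [cnt_succ, ind_support]
    rw [Finset.sum_congr rfl (fun i hi => by rw [ind_sub_single hi, ih])]
    by_cases h : m + 1 = S.card
    · have hne : S.Nonempty := Finset.card_pos.mp (by omega)
      rw [Finset.sum_congr rfl (fun i hi => by
        rw [if_pos (by rw [Finset.card_erase_of_mem hi]; omega)])]
      rw [Finset.sum_const, if_pos h]
      rw [smul_eq_mul, ← h, Nat.factorial_succ]
    · rw [if_neg h]
      refine Finset.sum_eq_zero (fun i hi => ?_)
      rw [if_neg (by rw [Finset.card_erase_of_mem hi]; have := Finset.card_pos.mpr ⟨i, hi⟩; omega)]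

lemma dtwo_support {a : ℕ} {S : Finset ℕ} (ha : a ∉ S) :
    (Finsupp.single a 2 + ind S).support = insert a S := by
  ext j
  rw [Finsupp.mem_support_iff, Finsupp.add_apply, ind_apply, Finsupp.single_apply,
    Finset.mem_insert]
  by_cases h : j = a
  · subst h; simp
  · simp [h, (show ¬ a = j from fun hh => h hh.symm)]

lemma dtwo_sub_a {a : ℕ} {S : Finset ℕ} (ha : a ∉ S) :
    (Finsupp.single a 2 + ind S) - Finsupp.single a 1 = ind (insert a S) := by
  ext j
  rw [Finsupp.tsub_apply, Finsupp.add_apply, ind_apply, ind_apply,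
    Finsupp.single_apply, Finsupp.single_apply]
  by_cases h : j = a
  · subst h; simp [ha]
  · simp [Finset.mem_insert, h, (show ¬ a = j from fun hh => h hh.symm)]

lemma dtwo_sub_i {a : ℕ} {S : Finset ℕ} (ha : a ∉ S) {i : ℕ} (hi : i ∈ S) :
    (Finsupp.single a 2 + ind S) - Finsupp.single i 1 = Finsupp.single a 2 + ind (S.erase i) := by
  have hia : ¬ i = a := fun hh => ha (hh ▸ hi)
  ext j
  rw [Finsupp.tsub_apply, Finsupp.add_apply, Finsupp.add_apply, ind_apply, ind_apply,
    Finsupp.single_apply, Finsupp.single_apply]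
  by_cases h : j = a
  · subst h; simp [ha, (show ¬ i = j from hia), Finset.mem_erase,
      (show ¬ (j : ℕ) ∈ S from ha)]
  · by_cases h2 : j = i
    · subst h2; simp [hi, h, (show ¬ a = j from fun hh => h hh.symm)]
    · simp [Finset.mem_erase, h, h2, (show ¬ a = j from fun hh => h hh.symm),
        (show ¬ i = j from fun hh => h2 hh.symm)]

lemma cnt_dtwo (m : ℕ) (a : ℕ) (S : Finset ℕ) (ha : a ∉ S) :
    2 * cnt (Fin m) (Finsupp.single a 2 + ind S)
      = if m = S.card + 2 then m.factorial else 0 := by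
  classical
  induction m generalizing S with
  | zero =>
    have hne : Finsupp.single a 2 + ind S ≠ 0 := by
      intro h
      have := DFunLike.congr_fun h a
      rw [Finsupp.add_apply, ind_apply, Finsupp.single_apply] at this
      simp [ha] at this
    rw [cnt_zero, if_neg hne]
    simp
  | succ m ih =>
    rw [cnt_succ, dtwo_support ha, Finset.sum_insert ha, mul_add, Finset.mul_sum]
    rw [dtwo_sub_a ha, cnt_ind]
    rw [Finset.sum_congr rfl (fun i hi => by
      rw [dtwo_sub_i ha hi, ih (S.erase i) (fun hh => ha (Finset.mem_of_mem_erase hh))])]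
    rw [Finset.card_insert_of_notMem ha]
    by_cases h : m + 1 = S.card + 2
    · rw [if_pos h, if_pos (by omega)]
      by_cases hS : S = ∅
      · subst hS
        simp only [Finset.sum_empty, add_zero]
        have : m = 1 := by simpa using h
        subst this; norm_num [Nat.factorial]
      · have hSpos : 0 < S.card := Finset.card_pos.mpr (Finset.nonempty_of_ne_empty hS)
        rw [Finset.sum_congr rfl (fun i hi => by
          rw [if_pos (by rw [Finset.card_erase_of_mem hi]; omega)])]
        rw [Finset.sum_const, smul_eq_mul]
        have hr : 2 * m.factorial + S.card * m.factorial = (S.card + 2) * m.factorial := by ring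
        rw [hr, ← h, Nat.factorial_succ]
    · rw [if_neg h, if_neg (by omega)]
      rw [mul_zero, zero_add]
      refine Finset.sum_eq_zero (fun i hi => ?_)
      rw [if_neg (by
        rw [Finset.card_erase_of_mem hi]
        have := Finset.card_pos.mpr ⟨i, hi⟩; omega)]

lemma coeff_mul_eq_zero_left {f g : MvPowerSeries ℕ ℚ} {d : ℕ →₀ ℕ}
    (h : ∀ a, a ≤ d → f a = 0) : (f * g) d = 0 := by
  rw [show (f * g) d = ∑ p ∈ Finset.HasAntidiagonal.antidiagonal d, f p.1 * g p.2
    from MvPowerSeries.coeff_mul (n := d) (φ := f) (ψ := g)]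
  refine Finset.sum_eq_zero fun p hp => ?_
  rw [Finset.HasAntidiagonal.mem_antidiagonal] at hp
  rw [h p.1 (hp ▸ self_le_add_right _ _), zero_mul]

lemma coeff_mul_eq_zero_right {f g : MvPowerSeries ℕ ℚ} {d : ℕ →₀ ℕ}
    (h : ∀ a, a ≤ d → g a = 0) : (f * g) d = 0 := by
  rw [show (f * g) d = ∑ p ∈ Finset.HasAntidiagonal.antidiagonal d, f p.1 * g p.2
    from MvPowerSeries.coeff_mul (n := d) (φ := f) (ψ := g)]
  refine Finset.sum_eq_zero fun p hp => ?_
  rw [Finset.HasAntidiagonal.mem_antidiagonal] at hp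
  rw [h p.2 (hp ▸ le_add_self), mul_zero]

lemma dA_le (n j : ℕ) : ((Finsupp.single 0 2 + ind (Finset.Ico 1 (n-1)) : ℕ →₀ ℕ)) j ≤ 2 := by
  rw [Finsupp.add_apply, ind_apply, Finsupp.single_apply]
  by_cases h : (0:ℕ) = j
  · simp [← h]
  · simp [h]; split <;> omega

lemma dB_le (n j : ℕ) : (ind (Finset.range n)) j ≤ 1 := by
  rw [ind_apply]; split <;> omega

lemma gam_eq {n : ℕ} (hn : 2 ≤ n) {x : MvPowerSeries ℕ ℚ} (hx : x ∈ Gam) :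
    2 * x (Finsupp.single 0 2 + ind (Finset.Ico 1 (n-1))) = x (ind (Finset.range n)) := by
  classical
  set dA := Finsupp.single 0 2 + ind (Finset.Ico 1 (n-1)) with hdA
  set dB := ind (Finset.range n) with hdB
  have hbound : ∀ j, dA j ≤ 2 := dA_le n
  have hboundB : ∀ j, dB j ≤ 1 := dB_le n
  have hxs : x ∈ Submodule.span ℚ
      ((Submonoid.closure {f | ∃ k : ℕ, Odd k ∧ f = pp k} : Submonoid (MvPowerSeries ℕ ℚ)) :
        Set (MvPowerSeries ℕ ℚ)) := by
    have := Algebra.adjoin_eq_span (R := ℚ) (s := {f | ∃ k : ℕ, Odd k ∧ f = pp k})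
    have hx' : x ∈ Subalgebra.toSubmodule (Algebra.adjoin ℚ {f | ∃ k : ℕ, Odd k ∧ f = pp k}) := hx
    rwa [this] at hx'
  refine Submodule.span_induction ?_ ?_ ?_ ?_ hxs
  · -- elements of the monoid closure
    intro z hz
    have hR : (∃ m, z = pp 1 ^ m) ∨ (∀ d, (d ≤ dA ∨ d ≤ dB) → z d = 0) := by
      refine Submonoid.closure_induction ?_ ?_ ?_ hz
      · rintro f ⟨k, hk, rfl⟩
        rcases Nat.lt_or_ge k 3 with hk3 | hk3
        · have : k = 1 := by
            rcases hk with ⟨t, ht⟩; omega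
          subst this
          exact Or.inl ⟨1, (pow_one _).symm⟩
        · refine Or.inr (fun d hd => ?_)
          rw [show pp k d = if ∃ i : ℕ, d = Finsupp.single i k then 1 else 0 from rfl]
          rw [if_neg]
          rintro ⟨i, rfl⟩
          have h2 : (Finsupp.single i k : ℕ →₀ ℕ) i = k := by simp
          rcases hd with hd | hd
          · have := (Finsupp.le_def.mp hd) i
            rw [h2] at this
            have := hbound i
            omega
          · have := (Finsupp.le_def.mp hd) i
            rw [h2] at this
            have := hboundB i
            omega
      · exact Or.inl ⟨0, (pow_zero _).symm⟩
      · rintro f g hf hg (⟨mf, rfl⟩ | hZf) hR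
        · rcases hR with ⟨mg, rfl⟩ | hZg
          · exact Or.inl ⟨mf + mg, (pow_add _ _ _).symm⟩
          · refine Or.inr (fun d hd => ?_)
            refine coeff_mul_eq_zero_right (fun a ha => ?_)
            rcases hd with hd | hd
            · exact hZg a (Or.inl (ha.trans hd))
            · exact hZg a (Or.inr (ha.trans hd))
        · refine Or.inr (fun d hd => ?_)
          refine coeff_mul_eq_zero_left (fun a ha => ?_)
          rcases hd with hd | hd
          · exact hZf a (Or.inl (ha.trans hd))
          · exact hZf a (Or.inr (ha.trans hd))
    rcases hR with ⟨m, rfl⟩ | hZ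
    · rw [pp_one_pow m dA, pp_one_pow m dB, hdA, hdB]
      have h0 : (0:ℕ) ∉ Finset.Ico 1 (n-1) := by simp
      rw [show (2 : ℚ) * ((cnt (Fin m) (Finsupp.single 0 2 + ind (Finset.Ico 1 (n-1))) : ℕ) : ℚ)
          = ((2 * cnt (Fin m) (Finsupp.single 0 2 + ind (Finset.Ico 1 (n-1))) : ℕ) : ℚ) by
        push_cast; ring]
      rw [cnt_dtwo m 0 _ h0, cnt_ind m]
      rw [Nat.card_Ico, Finset.card_range]
      have : (m = n - 1 - 1 + 2) ↔ (m = n) := by omega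
      by_cases hm : m = n
      · rw [if_pos (this.mpr hm), if_pos hm]
      · rw [if_neg (fun hh => hm (this.mp hh)), if_neg hm]
    · rw [hZ dA (Or.inl le_rfl), hZ dB (Or.inr le_rfl), mul_zero]
  · show 2 * (0 : MvPowerSeries ℕ ℚ) dA = (0 : MvPowerSeries ℕ ℚ) dB
    have h1 : (0 : MvPowerSeries ℕ ℚ) dA = 0 := rfl
    have h2 : (0 : MvPowerSeries ℕ ℚ) dB = 0 := rfl
    rw [h1, h2, mul_zero]
  · intro f g _ _ hf hg
    show 2 * (f + g) dA = (f + g) dB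
    have h1 : (f + g) dA = f dA + g dA := rfl
    have h2 : (f + g) dB = f dB + g dB := rfl
    rw [h1, h2, ← hf, ← hg]; ring
  · intro c f _ hf
    show 2 * (c • f) dA = (c • f) dB
    have h1 : (c • f) dA = c * f dA := rfl
    have h2 : (c • f) dB = c * f dB := rfl
    rw [h1, h2, ← hf]; ring

lemma fiber_iff {V : Type} [Fintype V] (κ : V → ℕ) (d : ℕ →₀ ℕ) :
    (∀ i : ℕ, Set.ncard {v | κ v = i} = d i) ↔ (∑ v, Finsupp.single (κ v) 1 = d) := by
  classical
  have hfib : ∀ i, Set.ncard {v | κ v = i} = (∑ v, Finsupp.single (κ v) 1) i := by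
    intro i
    have h1 : {v | κ v = i} = ↑(Finset.univ.filter (fun v => κ v = i)) := by ext v; simp
    rw [h1, Set.ncard_coe_finset, Finset.card_filter, Finsupp.finset_sum_apply]
    exact Finset.sum_congr rfl (fun v _ => (Finsupp.single_apply).symm)
  constructor
  · intro h
    ext i
    rw [← hfib i, h i]
  · intro h i
    rw [hfib i, h]

lemma cnt_eq_fin (V : Type) [Fintype V] (d : ℕ →₀ ℕ) :
    cnt V d = cnt (Fin (Fintype.card V)) d := by
  set e := Fintype.equivFin V
  refine Nat.card_congr ⟨fun κ => ⟨κ.1 ∘ e.symm, ?_⟩, fun κ => ⟨κ.1 ∘ e, ?_⟩, ?_, ?_⟩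
  · rw [show ∑ j, Finsupp.single ((κ.1 ∘ e.symm) j) 1
      = ∑ v, Finsupp.single (κ.1 v) 1 from Equiv.sum_comp e.symm (fun v => Finsupp.single (κ.1 v) 1)]
    exact κ.2
  · rw [show ∑ v, Finsupp.single ((κ.1 ∘ e) v) 1
      = ∑ j, Finsupp.single (κ.1 j) 1 from Equiv.sum_comp e (fun j => Finsupp.single (κ.1 j) 1)]
    exact κ.2
  · intro κ; ext v; simp
  · intro κ; ext j; simp

/-- a finite simple graph `G` has no edges if and only if its chromatic
symmetric function `X_G` lies in `Γ = ℚ[p₁, p₃, p₅, …]`. -/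
theorem csf_mem_Gamma_iff_no_edges {V : Type} [Fintype V] (G : SimpleGraph V) :
    (∀ u v : V, ¬ G.Adj u v) ↔ csf G ∈ Gam := by
  classical
  constructor
  · -- no edges → csf G = pp 1 ^ n ∈ Gam
    intro h
    have hcsf : csf G = pp 1 ^ (Fintype.card V) := by
      funext d
      rw [csf]
      have hset : {κ : V → ℕ | (∀ u v, G.Adj u v → κ u ≠ κ v)
          ∧ ∀ i : ℕ, Set.ncard {v | κ v = i} = d i}
          = {κ : V → ℕ | ∑ v, Finsupp.single (κ v) 1 = d} := by
        ext κ
        simp only [Set.mem_setOf_eq]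
        constructor
        · rintro ⟨-, hfib⟩; exact (fiber_iff κ d).mp hfib
        · intro hs; exact ⟨fun u v hadj => absurd hadj (h u v), (fiber_iff κ d).mpr hs⟩
      rw [hset]
      have : {κ : V → ℕ | ∑ v, Finsupp.single (κ v) 1 = d}.ncard = cnt V d := by
        rw [← Nat.card_coe_set_eq]; rfl
      rw [this, cnt_eq_fin, ← pp_one_pow]
    rw [hcsf]
    have h1 : pp 1 ∈ Gam :=
      Algebra.subset_adjoin (show pp 1 ∈ {f | ∃ k : ℕ, Odd k ∧ f = pp k} from ⟨1, odd_one, rfl⟩)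
    exact pow_mem h1 _
  · -- csf G ∈ Gam → no edges
    intro hGam u v hAdj
    set n := Fintype.card V with hn_def
    have hn : 2 ≤ n := by
      have h1 : 1 < Fintype.card V := Fintype.one_lt_card_iff_nontrivial.mpr ⟨⟨u, v, hAdj.ne⟩⟩
      omega
    set dA : ℕ →₀ ℕ := Finsupp.single 0 2 + ind (Finset.Ico 1 (n-1)) with hdA
    set dB : ℕ →₀ ℕ := ind (Finset.range n) with hdB
    have key := gam_eq hn hGam
    -- csf G dB = cnt V dB
    have hB : csf G dB = (cnt V dB : ℚ) := by
      rw [csf]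
      have hset : {κ : V → ℕ | (∀ u v, G.Adj u v → κ u ≠ κ v)
          ∧ ∀ i : ℕ, Set.ncard {v | κ v = i} = dB i}
          = {κ : V → ℕ | ∑ w, Finsupp.single (κ w) 1 = dB} := by
        ext κ
        simp only [Set.mem_setOf_eq]
        constructor
        · rintro ⟨-, hfib⟩; exact (fiber_iff κ dB).mp hfib
        · intro hs
          refine ⟨?_, (fiber_iff κ dB).mpr hs⟩
          intro a b hadj heq
          have h2 : (2:ℕ) ≤ dB (κ a) := by
            rw [← hs, Finsupp.finset_sum_apply]
            have hpair : ∑ w ∈ ({a, b} : Finset V), (Finsupp.single (κ w) 1) (κ a) = 2 := by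
              rw [Finset.sum_pair hadj.ne]
              rw [Finsupp.single_apply, Finsupp.single_apply, ← heq]
              simp
            calc (2:ℕ) = ∑ w ∈ ({a, b} : Finset V), (Finsupp.single (κ w) 1) (κ a) := hpair.symm
              _ ≤ ∑ w, (Finsupp.single (κ w) 1) (κ a) :=
                  Finset.sum_le_sum_of_subset (Finset.subset_univ _)
          have := dB_le n (κ a)
          rw [← hdB] at this
          omega
      rw [hset, ← Nat.card_coe_set_eq]
      rfl
    -- csf G dA < cnt V dA
    have hA : ∃ s : ℕ, csf G dA = (s : ℚ) ∧ s < cnt V dA := by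
      refine ⟨{κ : V → ℕ | (∀ u v, G.Adj u v → κ u ≠ κ v)
          ∧ ∀ i : ℕ, Set.ncard {v | κ v = i} = dA i}.ncard, rfl, ?_⟩
      have hset : {κ : V → ℕ | (∀ u v, G.Adj u v → κ u ≠ κ v)
          ∧ ∀ i : ℕ, Set.ncard {v | κ v = i} = dA i}
          = {κ : V → ℕ | (∀ u v, G.Adj u v → κ u ≠ κ v)
            ∧ ∑ w, Finsupp.single (κ w) 1 = dA} := by
        ext κ
        simp only [Set.mem_setOf_eq]
        exact and_congr_right (fun _ => fiber_iff κ dA)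
      rw [hset]
      have hTfin : {κ : V → ℕ | ∑ w, Finsupp.single (κ w) 1 = dA}.Finite :=
        Set.finite_coe_iff.mp (cnt_finite V dA)
      have hTcard : {κ : V → ℕ | ∑ w, Finsupp.single (κ w) 1 = dA}.ncard = cnt V dA := by
        rw [← Nat.card_coe_set_eq]; rfl
      rw [← hTcard]
      refine Set.ncard_lt_ncard ?_ hTfin
      -- strict inclusion via the witness κ₀
      have hCcard : (({u, v} : Finset V)ᶜ).card = n - 2 := by
        rw [Finset.card_compl, Finset.card_pair hAdj.ne]
      set eW := Finset.equivFinOfCardEq hCcard with heW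
      set κ₀ : V → ℕ := fun w =>
        if h : w ∈ (({u, v} : Finset V)ᶜ) then (eW ⟨w, h⟩ : ℕ) + 1 else 0 with hκ₀
      have hu : κ₀ u = 0 := by
        rw [hκ₀]; exact dif_neg (by simp)
      have hv : κ₀ v = 0 := by
        rw [hκ₀]; exact dif_neg (by simp)
      have hκ₀T : ∑ w, Finsupp.single (κ₀ w) 1 = dA := by
        rw [← Finset.sum_add_sum_compl ({u, v} : Finset V)]
        have h1 : ∑ w ∈ ({u, v} : Finset V), Finsupp.single (κ₀ w) 1
            = Finsupp.single 0 2 := by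
          rw [Finset.sum_pair hAdj.ne, hu, hv, ← Finsupp.single_add]
        have h2 : ∑ w ∈ (({u, v} : Finset V)ᶜ), Finsupp.single (κ₀ w) 1
            = ind (Finset.Ico 1 (n-1)) := by
          rw [← Finset.sum_attach (({u, v} : Finset V)ᶜ) (fun w => Finsupp.single (κ₀ w) 1)]
          have h3 : ∀ x : {w // w ∈ (({u, v} : Finset V)ᶜ)},
              Finsupp.single (κ₀ x.1) 1 = Finsupp.single ((eW x : ℕ) + 1) 1 := by
            intro x
            simp only [hκ₀]
            rw [dif_pos x.2]
          rw [Finset.sum_congr rfl (fun x _ => h3 x)]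
          rw [← Finset.univ_eq_attach]
          rw [show ∑ x : {w // w ∈ (({u, v} : Finset V)ᶜ)}, Finsupp.single ((eW x : ℕ) + 1) 1
            = ∑ i : Fin (n - 2), Finsupp.single ((i : ℕ) + 1) 1
            from Equiv.sum_comp eW (fun i : Fin (n-2) => Finsupp.single ((i : ℕ) + 1) 1)]
          have e1 : ∑ i : Fin (n-2), Finsupp.single ((i:ℕ)+1) 1
              = ∑ i ∈ Finset.range (n-2), Finsupp.single (i+1) 1 :=
            Fin.sum_univ_eq_sum_range (fun i => Finsupp.single (i+1) 1) (n-2)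
          have e2 : ind (Finset.Ico 1 (n-1))
              = ∑ i ∈ Finset.range (n-1-1), Finsupp.single (1+i) 1 := by
            rw [ind]
            exact Finset.sum_Ico_eq_sum_range (fun j => Finsupp.single j 1) 1 (n-1)
          have hnn : n - 1 - 1 = n - 2 := by rw [Nat.sub_sub]
          rw [e1, e2, hnn]
          exact Finset.sum_congr rfl (fun i _ => by rw [add_comm 1 i])
        rw [h1, h2]
      refine (Set.ssubset_iff_of_subset (fun κ hκ => hκ.2)).mpr ⟨κ₀, hκ₀T, ?_⟩
      rintro ⟨hproper, -⟩
      exact hproper u v hAdj (by rw [hu, hv])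
    -- combine
    obtain ⟨s, hs, hslt⟩ := hA
    have hcnt2 : 2 * cnt V dA = cnt V dB := by
      rw [show cnt V dA = cnt (Fin n) dA from cnt_eq_fin V dA,
        show cnt V dB = cnt (Fin n) dB from cnt_eq_fin V dB, hdA, hdB]
      rw [cnt_dtwo n 0 _ (by simp), cnt_ind]
      rw [Nat.card_Ico, Finset.card_range]
      rw [if_pos (by omega : n = n - 1 - 1 + 2), if_pos rfl]
    rw [hs, hB] at key
    have : 2 * s < 2 * cnt V dA := by omega
    rw [hcnt2] at this
    have hq : (2 * s : ℚ) = ((cnt V dB : ℕ) : ℚ) := by exact_mod_cast key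
    have : ((2 * s : ℕ) : ℚ) < ((cnt V dB : ℕ) : ℚ) := by exact_mod_cast Nat.cast_lt.mpr this
    rw [show ((2 * s : ℕ) : ℚ) = (2 * s : ℚ) by push_cast; ring, hq] at this
    exact lt_irrefl _ this
end

section
/- For n ≥ 3, the ribbon Schur Q-function r_{Δ_{n,3}} = q_n − q_{n−1} q_1 + q_{n−2} q_2 has p-expansion r_{Δ_{n,3}} = Σ_{λ ∈ OP(n)} c_λ p_λ with c_λ = z_λ^{−1} 2^{ℓ(λ)} if m_1(λ) = 0, c_λ = 0 if m_1(λ) ∈ {1,2}, and c_λ = C(m_1(λ)−1, 2) z_λ^{−1} 2^{ℓ(λ)} if m_1(λ) ≥ 3. In particular, r_{Δ_{n,3}} is p-positive. -/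
open MvPolynomial

/-- The power sum symmetric function `p_k`, modeled as the generator `X k` of the free
commutative `ℚ`-algebra on the (algebraically independent) power sum symmetric functions. -/
noncomputable def p (k : ℕ) : MvPolynomial ℕ ℚ := X k

/-- `p_λ = p_{λ₁} ⋯ p_{λ_ℓ}` for a multiset (partition) `λ`. -/
noncomputable def pProd (l : Multiset ℕ) : MvPolynomial ℕ ℚ := (l.map p).prod

/-- `z_λ = ∏ i i^{m_i} m_i!` for `λ = (1^{m_1} 2^{m_2} ⋯)`. -/
def zed (l : Multiset ℕ) : ℕ := l.prod * ∏ i ∈ l.toFinset, (l.count i).factorial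

/-- The one-row Schur `Q`-function `q_n = ∑_{λ ∈ OP(n)} z_λ⁻¹ 2^{ℓ(λ)} p_λ` (with `q_0 = 1`),
where `OP(n)` is the set of partitions of `n` into odd parts. -/
noncomputable def q (n : ℕ) : MvPolynomial ℕ ℚ :=
  ∑ lam ∈ Nat.Partition.odds n,
    C ((zed lam.parts : ℚ)⁻¹ * 2 ^ Multiset.card lam.parts) * pProd lam.parts

/-- The matrix `A(α)` associated to a composition `α` (given as a list of row lengths):
`A(α)_{ij} = q_{α_i + ⋯ + α_j}` for `i ≤ j`, `q_0 = 1` for `i = j+1`, and `0` otherwise. -/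
noncomputable def ribbonMatrix (l : List ℕ) :
    Matrix (Fin l.length) (Fin l.length) (MvPolynomial ℕ ℚ) :=
  Matrix.of fun i j =>
    if (i : ℕ) ≤ (j : ℕ) then q (∑ t ∈ Finset.Icc i j, l.get t)
    else if (i : ℕ) = (j : ℕ) + 1 then 1 else 0

/-- The ribbon Schur `Q`-function `r_α = det A(α)` of the (connected) ribbon whose
composition (list of row lengths, top row first) is `α`. -/
noncomputable def ribbonQ (l : List ℕ) : MvPolynomial ℕ ℚ := (ribbonMatrix l).det

/-- A symmetric function (element of `Γ`) is `p`-positive if all its coefficients in the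
power sum basis are nonnegative. -/
def pPos (f : MvPolynomial ℕ ℚ) : Prop := ∀ d : ℕ →₀ ℕ, 0 ≤ coeff d f

/-- The hook ribbon `Δ_{n,k}` of size `n` with `k` rows: composition `(n-k+1, 1, …, 1)`. -/
def deltaComp (n k : ℕ) : List ℕ := (n - k + 1) :: List.replicate (k - 1) 1

/-! ### Auxiliary lemmas -/

lemma pProd_cons (a : ℕ) (s : Multiset ℕ) : pProd (a ::ₘ s) = p a * pProd s := by
  simp [pProd]

lemma zed_ne_zero {s : Multiset ℕ} (h : ∀ i ∈ s, 0 < i) : zed s ≠ 0 := by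
  have h1 : 0 < s.prod := Multiset.prod_pos h
  have h2 : 0 < ∏ i ∈ s.toFinset, (s.count i).factorial :=
    Finset.prod_pos fun i _ => Nat.factorial_pos _
  exact Nat.mul_ne_zero h1.ne' h2.ne'

lemma zed_cons (a : ℕ) (s : Multiset ℕ) : zed (a ::ₘ s) = a * ((s.count a + 1) * zed s) := by
  unfold zed
  rw [Multiset.prod_cons]
  have key : ∏ i ∈ (a ::ₘ s).toFinset, ((a ::ₘ s).count i).factorial
      = (s.count a + 1) * ∏ i ∈ s.toFinset, (s.count i).factorial := by
    by_cases ha : a ∈ s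
    · have hfs : (a ::ₘ s).toFinset = s.toFinset := by
        simp [Multiset.toFinset_cons, Finset.insert_eq_self, ha]
      rw [hfs]
      have hmem : a ∈ s.toFinset := Multiset.mem_toFinset.mpr ha
      rw [← Finset.mul_prod_erase _ _ hmem, ← Finset.mul_prod_erase _ _ hmem]
      have : ∏ i ∈ s.toFinset.erase a, ((a ::ₘ s).count i).factorial
          = ∏ i ∈ s.toFinset.erase a, (s.count i).factorial := by
        apply Finset.prod_congr rfl
        intro i hi
        rw [Multiset.count_cons_of_ne (Finset.ne_of_mem_erase hi)]
      rw [this, Multiset.count_cons_self, Nat.factorial_succ]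
      ring
    · have hc : s.count a = 0 := Multiset.count_eq_zero_of_notMem ha
      rw [Multiset.toFinset_cons, Finset.prod_insert (by simpa using ha)]
      rw [Multiset.count_cons_self, hc]
      have : ∏ i ∈ s.toFinset, ((a ::ₘ s).count i).factorial
          = ∏ i ∈ s.toFinset, (s.count i).factorial := by
        apply Finset.prod_congr rfl
        intro i hi
        rw [Multiset.count_cons_of_ne]
        rintro rfl; exact ha (Multiset.mem_toFinset.mp hi)
      rw [this]
      simp
  rw [key]; ring

lemma mem_odds {n : ℕ} (lam : Nat.Partition n) :
    lam ∈ Nat.Partition.odds n ↔ ∀ i ∈ lam.parts, ¬ Even i := by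
  simp [Nat.Partition.odds, Nat.Partition.restricted]

/-- Adding a part `1` to a partition. -/
def consOne {k : ℕ} (μ : Nat.Partition k) : Nat.Partition (k+1) where
  parts := 1 ::ₘ μ.parts
  parts_pos := by
    intro i hi
    rcases Multiset.mem_cons.mp hi with h | h
    · omega
    · exact μ.parts_pos h
  parts_sum := by rw [Multiset.sum_cons, μ.parts_sum]; omega

/-- Deleting a part `1` from a partition. -/
def eraseOne {k : ℕ} (lam : Nat.Partition (k+1)) (h : 1 ∈ lam.parts) : Nat.Partition k where
  parts := lam.parts.erase 1
  parts_pos := fun hi => lam.parts_pos (Multiset.mem_of_mem_erase hi)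
  parts_sum := by
    have h2 : (1 ::ₘ lam.parts.erase 1).sum = k + 1 := by
      rw [Multiset.cons_erase h, lam.parts_sum]
    rw [Multiset.sum_cons] at h2; omega

/-- Key reindexing lemma: multiplying a sum over odd partitions of `k` by `p 1`
gives a sum over odd partitions of `k+1`. -/
theorem sum_mul_p_one (k : ℕ) (G : Multiset ℕ → ℚ) :
    (∑ μ ∈ Nat.Partition.odds k, C (G μ.parts) * pProd μ.parts) * p 1
      = ∑ lam ∈ Nat.Partition.odds (k+1),
          C (if 1 ∈ lam.parts then G (lam.parts.erase 1) else 0) * pProd lam.parts := by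
  have hsplit : ∀ lam ∈ Nat.Partition.odds (k+1),
      C (if 1 ∈ lam.parts then G (lam.parts.erase 1) else 0) * pProd lam.parts
      = if 1 ∈ lam.parts then C (G (lam.parts.erase 1)) * pProd lam.parts else 0 := by
    intro lam _; split <;> simp
  rw [Finset.sum_congr rfl hsplit, ← Finset.sum_filter, Finset.sum_mul]
  refine Finset.sum_bij' (fun μ (_ : μ ∈ Nat.Partition.odds k) => consOne μ)
    (fun lam hlam => eraseOne lam (Finset.mem_filter.mp hlam).2) ?_ ?_ ?_ ?_ ?_
  · intro μ hμ
    rw [Finset.mem_filter]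
    constructor
    · rw [mem_odds]
      intro i hi
      rcases Multiset.mem_cons.mp hi with h | h
      · subst h; decide
      · exact (mem_odds μ).mp hμ i h
    · exact Multiset.mem_cons_self 1 μ.parts
  · intro lam hlam
    rw [mem_odds]
    intro i hi
    exact (mem_odds lam).mp (Finset.mem_filter.mp hlam).1 i (Multiset.mem_of_mem_erase hi)
  · intro μ hμ
    apply Nat.Partition.ext
    show (1 ::ₘ μ.parts).erase 1 = μ.parts
    exact Multiset.erase_cons_head 1 μ.parts
  · intro lam hlam
    apply Nat.Partition.ext
    show 1 ::ₘ lam.parts.erase 1 = lam.parts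
    exact Multiset.cons_erase (Finset.mem_filter.mp hlam).2
  · intro μ hμ
    show C (G μ.parts) * pProd μ.parts * p 1
        = C (G ((1 ::ₘ μ.parts).erase 1)) * pProd (1 ::ₘ μ.parts)
    rw [Multiset.erase_cons_head, pProd_cons]
    ring

/-! ### The coefficient functions -/

noncomputable def G0 (s : Multiset ℕ) : ℚ := (zed s : ℚ)⁻¹ * 2 ^ Multiset.card s
noncomputable def G1 (s : Multiset ℕ) : ℚ := if 1 ∈ s then G0 (s.erase 1) else 0
noncomputable def G2 (s : Multiset ℕ) : ℚ := if 1 ∈ s then G1 (s.erase 1) else 0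

lemma coeff_key {s : Multiset ℕ} (hpos : ∀ i ∈ s, 0 < i) :
    G0 s - 2 * G1 s + 2 * G2 s =
      (if s.count 1 = 0 then G0 s
       else if s.count 1 ≤ 2 then 0
       else ((s.count 1 - 1).choose 2 : ℚ) * (zed s : ℚ)⁻¹ * 2 ^ Multiset.card s) := by
  by_cases h1 : 1 ∈ s
  · obtain ⟨t, rfl⟩ := Multiset.exists_cons_of_mem h1
    have hG1 : G1 (1 ::ₘ t) = G0 t := by
      simp [G1, Multiset.erase_cons_head]
    have hG2 : G2 (1 ::ₘ t) = G1 t := by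
      by_cases h2 : 1 ∈ t
      · simp [G2, G1, Multiset.erase_cons_head, h2]
      · simp [G2, G1, Multiset.erase_cons_head, h2]
    rw [hG1, hG2]
    by_cases h2 : 1 ∈ t
    · obtain ⟨u, rfl⟩ := Multiset.exists_cons_of_mem h2
      have hu : ∀ i ∈ u, 0 < i := fun i hi => hpos i (by simp [hi])
      have hz : (zed u : ℚ) ≠ 0 := Nat.cast_ne_zero.mpr (zed_ne_zero hu)
      have hG1t : G1 (1 ::ₘ u) = G0 u := by simp [G1, Multiset.erase_cons_head]
      rw [hG1t]
      have hzt : zed (1 ::ₘ u) = (u.count 1 + 1) * zed u := by rw [zed_cons]; ring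
      have hzs : zed (1 ::ₘ 1 ::ₘ u) = (u.count 1 + 2) * ((u.count 1 + 1) * zed u) := by
        rw [zed_cons, hzt, Multiset.count_cons_self]; ring
      have hcount : (1 ::ₘ 1 ::ₘ u).count 1 = u.count 1 + 2 := by
        simp [Multiset.count_cons_self]
      set c := u.count 1 with hc
      have hcc : ((c + 2 : ℕ) : ℚ) ≠ 0 := by positivity
      have hc1 : ((c + 1 : ℕ) : ℚ) ≠ 0 := by positivity
      rw [hcount]
      by_cases hc0 : c = 0
      · rw [if_neg (by omega), if_pos (by omega)]
        simp only [G0, hzs, hzt, Multiset.card_cons, hc0]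
        push_cast
        field_simp
        ring
      · rw [if_neg (by omega), if_neg (by omega)]
        have hch : ((c + 2 - 1).choose 2 : ℚ) = (c + 1) * c / 2 := by
          have : c + 2 - 1 = c + 1 := by omega
          rw [this, Nat.cast_choose_two]
          push_cast
          ring
        simp only [G0, hzs, hzt, Multiset.card_cons, hch]
        push_cast
        field_simp
        ring
    · have hG1t : G1 t = 0 := by simp [G1, h2]
      rw [hG1t]
      have hcount : (1 ::ₘ t).count 1 = 1 := by
        simp [Multiset.count_cons_self, Multiset.count_eq_zero_of_notMem h2]
      rw [hcount, if_neg (by omega), if_pos (by omega)]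
      have hzt : zed (1 ::ₘ t) = zed t := by
        rw [zed_cons, Multiset.count_eq_zero_of_notMem h2]; ring
      simp only [G0, hzt, Multiset.card_cons]
      ring
  · have h0 : s.count 1 = 0 := Multiset.count_eq_zero_of_notMem h1
    simp [G1, G2, h1, h0]

/-! ### Computing `q 1` and `q 2` -/

def myP1 : Nat.Partition 1 where
  parts := {1}
  parts_pos := by intro i hi; simp at hi; omega
  parts_sum := rfl

def myP11 : Nat.Partition 2 where
  parts := {1, 1}
  parts_pos := by intro i hi; simp at hi; omega
  parts_sum := rfl

lemma odds_one : Nat.Partition.odds 1 = {myP1} := by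
  rw [Finset.eq_singleton_iff_unique_mem]
  constructor
  · rw [mem_odds]; decide
  · intro b _
    apply Nat.Partition.ext
    rw [Nat.Partition.partition_one_parts]; rfl

lemma odds_two : Nat.Partition.odds 2 = {myP11} := by
  rw [Finset.eq_singleton_iff_unique_mem]
  constructor
  · rw [mem_odds]; decide
  · intro b hb
    apply Nat.Partition.ext
    have hodd := (mem_odds b).mp hb
    have hall : ∀ x ∈ b.parts, x = 1 := by
      intro x hx
      have h1 : x ≤ 2 := (Multiset.le_sum_of_mem hx).trans_eq b.parts_sum
      have h2 : ¬ Even x := hodd x hx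
      have h3 : 0 < x := b.parts_pos hx
      interval_cases x <;> simp_all
    have hrep : b.parts = Multiset.replicate (Multiset.card b.parts) 1 :=
      Multiset.eq_replicate_card.2 hall
    have hcard : Multiset.card b.parts = 2 := by
      have := b.parts_sum
      rw [hrep] at this
      simpa using this
    rw [hrep, hcard]
    rfl

lemma q_one : q 1 = C 2 * p 1 := by
  rw [q, odds_one, Finset.sum_singleton]
  show C ((zed {1} : ℚ)⁻¹ * 2 ^ Multiset.card {1}) * pProd {1} = _
  have h1 : zed {1} = 1 := by decide
  have h2 : pProd {1} = p 1 := by simp [pProd]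
  rw [h1, h2]
  norm_num

lemma q_two : q 2 = C 2 * (p 1 * p 1) := by
  rw [q, odds_two, Finset.sum_singleton]
  show C ((zed {1, 1} : ℚ)⁻¹ * 2 ^ Multiset.card {1, 1}) * pProd {1, 1} = _
  have h1 : zed {1, 1} = 2 := by decide
  have h2 : pProd {1, 1} = p 1 * p 1 := by
    show pProd (1 ::ₘ {1}) = _
    simp [pProd]
  rw [h1, h2]
  norm_num

/-! ### `q k` times powers of `p 1` -/

lemma q_eq (k : ℕ) : q k = ∑ lam ∈ Nat.Partition.odds k, C (G0 lam.parts) * pProd lam.parts := rfl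

lemma q_mul_p_one (k : ℕ) :
    q k * p 1 = ∑ lam ∈ Nat.Partition.odds (k+1), C (G1 lam.parts) * pProd lam.parts :=
  sum_mul_p_one k G0

lemma q_mul_p_one_sq (k : ℕ) :
    q k * p 1 * p 1 = ∑ lam ∈ Nat.Partition.odds (k+2), C (G2 lam.parts) * pProd lam.parts := by
  rw [q_mul_p_one]
  exact sum_mul_p_one (k+1) G1

/-! ### The 3×3 determinant -/

noncomputable def M3 (a : ℕ) : Matrix (Fin 3) (Fin 3) (MvPolynomial ℕ ℚ) := ribbonMatrix [a,1,1]

lemma det_part (m : ℕ) :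
    ribbonQ (deltaComp (m+3) 3) = q (m+3) - q (m+2) * q 1 + q (m+1) * q 2 := by
  have h : ribbonQ (deltaComp (m+3) 3) = (M3 (m+1)).det := rfl
  have e01 : Finset.Icc (0 : Fin 3) 1 = {0, 1} := rfl
  have e02 : Finset.Icc (0 : Fin 3) 2 = {0, 1, 2} := rfl
  have e12 : Finset.Icc (1 : Fin 3) 2 = {1, 2} := rfl
  have a00 : M3 (m+1) 0 0 = q (m+1) := by
    simp [M3, ribbonMatrix]
  have a01 : M3 (m+1) 0 1 = q (m+2) := by
    simp [M3, ribbonMatrix, e01, Finset.sum_pair (show (0:Fin 3) ≠ 1 by decide)]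
  have a02 : M3 (m+1) 0 2 = q (m+3) := by
    simp [M3, ribbonMatrix, e02, show ({0,1,2} : Finset (Fin 3)) = insert 0 {1,2} from rfl,
      Finset.sum_insert (show (0:Fin 3) ∉ ({1,2} : Finset (Fin 3)) by decide),
      Finset.sum_pair (show (1:Fin 3) ≠ 2 by decide)]
  have a10 : M3 (m+1) 1 0 = 1 := by simp [M3, ribbonMatrix]
  have a11 : M3 (m+1) 1 1 = q 1 := by simp [M3, ribbonMatrix]
  have a12 : M3 (m+1) 1 2 = q 2 := by
    simp [M3, ribbonMatrix, e12, Finset.sum_pair (show (1:Fin 3) ≠ 2 by decide)]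
  have a20 : M3 (m+1) 2 0 = 0 := by simp [M3, ribbonMatrix]
  have a21 : M3 (m+1) 2 1 = 1 := by simp [M3, ribbonMatrix]
  have a22 : M3 (m+1) 2 2 = q 1 := by simp [M3, ribbonMatrix]
  have c2 : (C (2:ℚ) : MvPolynomial ℕ ℚ) = 2 := map_ofNat C 2
  rw [h, Matrix.det_fin_three, a00, a01, a02, a10, a11, a12, a20, a21, a22, q_one, q_two, c2]
  ring

/-! ### The p-expansion -/

lemma expansion_part (m : ℕ) :
    q (m+3) - q (m+2) * q 1 + q (m+1) * q 2 =
      ∑ lam ∈ Nat.Partition.odds (m+3),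
        C (if lam.parts.count 1 = 0 then (zed lam.parts : ℚ)⁻¹ * 2 ^ Multiset.card lam.parts
           else if lam.parts.count 1 ≤ 2 then 0
           else ((lam.parts.count 1 - 1).choose 2 : ℚ) *
             (zed lam.parts : ℚ)⁻¹ * 2 ^ Multiset.card lam.parts) * pProd lam.parts := by
  have h2 : q (m+2) * q 1
      = ∑ lam ∈ Nat.Partition.odds (m+3), C (2 * G1 lam.parts) * pProd lam.parts := by
    rw [q_one, show q (m+2) * (C 2 * p 1) = C 2 * (q (m+2) * p 1) from by ring,
      q_mul_p_one (m+2), Finset.mul_sum]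
    exact Finset.sum_congr rfl fun lam _ => by rw [← mul_assoc, ← C_mul]
  have h3 : q (m+1) * q 2
      = ∑ lam ∈ Nat.Partition.odds (m+3), C (2 * G2 lam.parts) * pProd lam.parts := by
    rw [q_two, show q (m+1) * (C 2 * (p 1 * p 1)) = C 2 * (q (m+1) * p 1 * p 1) from by ring,
      q_mul_p_one_sq (m+1), Finset.mul_sum]
    exact Finset.sum_congr rfl fun lam _ => by rw [← mul_assoc, ← C_mul]
  rw [h2, h3, q_eq (m+3), ← Finset.sum_sub_distrib, ← Finset.sum_add_distrib]
  apply Finset.sum_congr rfl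
  intro lam _
  have hpos : ∀ i ∈ lam.parts, 0 < i := fun i hi => lam.parts_pos hi
  have hkey := coeff_key hpos
  have : C (G0 lam.parts) * pProd lam.parts - C (2 * G1 lam.parts) * pProd lam.parts
      + C (2 * G2 lam.parts) * pProd lam.parts
      = C (G0 lam.parts - 2 * G1 lam.parts + 2 * G2 lam.parts) * pProd lam.parts := by
    rw [map_add, map_sub, map_mul, map_mul]
    have c2 : (C (2:ℚ) : MvPolynomial ℕ ℚ) = 2 := map_ofNat C 2
    rw [c2]
    ring
  rw [this, hkey]
  rfl

lemma pProd_coeff_nonneg (s : Multiset ℕ) : ∀ d : ℕ →₀ ℕ, 0 ≤ coeff d (pProd s) := by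
  induction s using Multiset.induction with
  | empty => intro d; show 0 ≤ coeff d (1 : MvPolynomial ℕ ℚ); rw [coeff_one]; positivity
  | cons a t ih =>
    intro d
    rw [pProd_cons, p, mul_comm, coeff_mul_X']
    split
    · exact ih _
    · exact le_refl 0

/-- for `n ≥ 3`, `r_{Δ_{n,3}} = q_n - q_{n-1} q_1 + q_{n-2} q_2` has
`p`-expansion `∑_{λ ∈ OP(n)} c_λ p_λ` where `c_λ = z_λ⁻¹ 2^{ℓ(λ)}` if `m_1(λ) = 0`,
`c_λ = 0` if `m_1(λ) ∈ {1, 2}`, and `c_λ = C(m_1(λ)-1, 2) z_λ⁻¹ 2^{ℓ(λ)}` if `m_1(λ) ≥ 3`.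
In particular `r_{Δ_{n,3}}` is `p`-positive. -/
theorem ribbonQ_delta_three (n : ℕ) (hn : 3 ≤ n) :
    ribbonQ (deltaComp n 3) = q n - q (n - 1) * q 1 + q (n - 2) * q 2 ∧
    q n - q (n - 1) * q 1 + q (n - 2) * q 2 =
      ∑ lam ∈ Nat.Partition.odds n,
        C (if lam.parts.count 1 = 0 then (zed lam.parts : ℚ)⁻¹ * 2 ^ Multiset.card lam.parts
           else if lam.parts.count 1 ≤ 2 then 0
           else ((lam.parts.count 1 - 1).choose 2 : ℚ) *
             (zed lam.parts : ℚ)⁻¹ * 2 ^ Multiset.card lam.parts) * pProd lam.parts ∧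
    pPos (ribbonQ (deltaComp n 3)) := by
  obtain ⟨m, rfl⟩ : ∃ m, n = m + 3 := ⟨n - 3, by omega⟩
  have hd : ribbonQ (deltaComp (m+3) 3) = q (m+3) - q (m+2) * q 1 + q (m+1) * q 2 := det_part m
  have he := expansion_part m
  have h1 : m + 3 - 1 = m + 2 := rfl
  have h2 : m + 3 - 2 = m + 1 := rfl
  refine ⟨by rw [h1, h2]; exact hd, by rw [h1, h2]; exact he, ?_⟩
  intro d
  rw [hd, he, coeff_sum]
  apply Finset.sum_nonneg
  intro lam _
  rw [coeff_C_mul]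
  have hcoef : (0:ℚ) ≤ (if lam.parts.count 1 = 0
      then (zed lam.parts : ℚ)⁻¹ * 2 ^ Multiset.card lam.parts
      else if lam.parts.count 1 ≤ 2 then 0
      else ((lam.parts.count 1 - 1).choose 2 : ℚ) *
        (zed lam.parts : ℚ)⁻¹ * 2 ^ Multiset.card lam.parts) := by
    split
    · positivity
    · split
      · exact le_refl 0
      · positivity
  exact mul_nonneg hcoef (pProd_coeff_nonneg lam.parts d)
end

section
/- Let n be a positive even integer and λ a partition of n with exactly two parts, both odd (λ = (n/2, n/2) if n/2 is odd, and λ = (n/2+1, n/2−1) if n/2 is even). Then for even k with 1 < k < n/2, the coefficient of p_λ in r_{Δ_{n,k}} = Σ_{i=0}^{k−1} (−1)^{k+i−1} q_{n−i} q_i equals the coefficient of p_λ in −q_n, which is negative; hence r_{Δ_{n,k}} is not p-positive. -/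
open MvPolynomial

lemma pProd_monomial (l : Multiset ℕ) : pProd l = monomial l.toFinsupp 1 := by
  induction l using Multiset.induction with
  | empty => simp [pProd]
  | cons a s ih =>
    rw [pProd, Multiset.map_cons, Multiset.prod_cons, ← pProd, ih,
      show (a ::ₘ s) = {a} + s from (Multiset.singleton_add a s).symm,
      Multiset.toFinsupp_add, Multiset.toFinsupp_singleton, p, X, monomial_mul, one_mul]

lemma q_zero : q 0 = 1 := by
  rw [q, show Nat.Partition.odds 0 = {default} from by
    apply Finset.eq_singleton_iff_unique_mem.2
    exact ⟨by simp [Nat.Partition.odds, Nat.Partition.restricted], fun x _ => Subsingleton.elim x default⟩]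
  simp [zed, pProd]

lemma coeff_q_self (M : Multiset ℕ) (n : ℕ) (hpos : ∀ x ∈ M, 0 < x) (hsum : M.sum = n)
    (hodd : ∀ x ∈ M, Odd x) :
    coeff M.toFinsupp (q n) = (zed M : ℚ)⁻¹ * 2 ^ Multiset.card M := by
  classical
  rw [q]
  simp only [pProd_monomial]
  rw [coeff_sum, Finset.sum_eq_single (⟨M, fun {i} hi => hpos i hi, hsum⟩ : n.Partition)]
  · rw [coeff_C_mul, coeff_monomial, if_pos rfl, mul_one]
  · intro lam _ hne
    rw [coeff_C_mul, coeff_monomial, if_neg, mul_zero]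
    intro h
    exact hne (Nat.Partition.ext (Multiset.toFinsupp.injective h))
  · intro h
    refine absurd ?_ h
    simp only [Nat.Partition.odds, Nat.Partition.restricted, Finset.mem_filter, Finset.mem_univ, true_and]
    intro i hi
    exact Nat.not_even_iff_odd.2 (hodd i hi)

lemma coeff_mul_q_zero (M : Multiset ℕ) (m i : ℕ) (hi : 0 < i) (hM : ∀ x ∈ M, i < x) :
    coeff M.toFinsupp (q m * q i) = 0 := by
  classical
  rw [q, q, Finset.sum_mul_sum]
  simp only [pProd_monomial]
  rw [coeff_sum]
  refine Finset.sum_eq_zero fun lam _ => ?_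
  rw [coeff_sum]
  refine Finset.sum_eq_zero fun mu _ => ?_
  rw [mul_mul_mul_comm, ← C_mul, monomial_mul, C_mul_monomial, ← Multiset.toFinsupp_add,
    coeff_monomial, if_neg]
  intro h
  have heq : lam.parts + mu.parts = M := Multiset.toFinsupp.injective h
  obtain ⟨x, hx⟩ := Multiset.exists_mem_of_ne_zero (s := mu.parts)
    (fun h0 => absurd (mu.parts_sum.symm.trans (by rw [h0]; simp)) hi.ne')
  have h1 : x ≤ i := mu.parts_sum ▸ Multiset.le_sum_of_mem hx
  have h2 : i < x := hM x (heq ▸ Multiset.mem_add.2 (Or.inr hx))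
  omega

lemma master (n k a b : ℕ) (hab : a + b = n) (ha : Odd a) (hb : Odd b)
    (hak : k < a) (hbk : k < b) (hkeven : Even k) (hk1 : 1 < k) :
    (coeff (Multiset.toFinsupp ({a, b} : Multiset ℕ))
        (∑ i ∈ Finset.range k, (-1 : MvPolynomial ℕ ℚ) ^ (k + i - 1) * q (n - i) * q i) =
      coeff (Multiset.toFinsupp ({a, b} : Multiset ℕ)) (-(q n))) ∧
    coeff (Multiset.toFinsupp ({a, b} : Multiset ℕ)) (-(q n)) < 0 ∧
    ¬ pPos (∑ i ∈ Finset.range k, (-1 : MvPolynomial ℕ ℚ) ^ (k + i - 1) * q (n - i) * q i) := by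
  have hpos : ∀ x ∈ ({a, b} : Multiset ℕ), 0 < x := by
    intro x hx
    rcases Multiset.mem_cons.1 hx with h | h
    · omega
    · rw [Multiset.mem_singleton.1 h]; omega
  have hodd : ∀ x ∈ ({a, b} : Multiset ℕ), Odd x := by
    intro x hx
    rcases Multiset.mem_cons.1 hx with h | h
    · rwa [h]
    · rw [Multiset.mem_singleton.1 h]; exact hb
  have hlt : ∀ i, i < k → ∀ x ∈ ({a, b} : Multiset ℕ), i < x := by
    intro i hik x hx
    rcases Multiset.mem_cons.1 hx with h | h
    · omega
    · rw [Multiset.mem_singleton.1 h]; omega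
  have hsum : ({a, b} : Multiset ℕ).sum = n := by simp [hab]
  have hqn : coeff (Multiset.toFinsupp ({a, b} : Multiset ℕ)) (q n)
      = (zed ({a, b} : Multiset ℕ) : ℚ)⁻¹ * 2 ^ (2 : ℕ) := by
    rw [coeff_q_self _ n hpos hsum hodd]; norm_num
  have hzpos : (0 : ℚ) < (zed ({a, b} : Multiset ℕ) : ℚ) := by
    have : 0 < zed ({a, b} : Multiset ℕ) := by
      refine Nat.mul_pos ?_ (Finset.prod_pos fun i _ => Nat.factorial_pos _)
      refine Multiset.prod_pos hpos
    exact_mod_cast this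
  have hqnpos : 0 < coeff (Multiset.toFinsupp ({a, b} : Multiset ℕ)) (q n) := by
    rw [hqn]; positivity
  have hneg : coeff (Multiset.toFinsupp ({a, b} : Multiset ℕ)) (-(q n)) < 0 := by
    rw [coeff_neg]; linarith
  have hC : ((-1 : MvPolynomial ℕ ℚ)) = C (-1) := by simp
  have hsumeq : coeff (Multiset.toFinsupp ({a, b} : Multiset ℕ))
      (∑ i ∈ Finset.range k, (-1 : MvPolynomial ℕ ℚ) ^ (k + i - 1) * q (n - i) * q i)
      = coeff (Multiset.toFinsupp ({a, b} : Multiset ℕ)) (-(q n)) := by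
    rw [coeff_sum, Finset.sum_eq_single 0]
    · rw [Nat.add_zero, Nat.sub_zero, q_zero, mul_one, Odd.neg_one_pow
        (Nat.Even.sub_odd (le_of_lt hk1) hkeven odd_one), neg_one_mul, coeff_neg]
    · intro i hi hine
      rw [hC, ← map_pow, mul_assoc, coeff_C_mul,
        coeff_mul_q_zero _ _ i (Nat.pos_of_ne_zero hine) (hlt i (Finset.mem_range.1 hi)),
        mul_zero]
    · intro h
      exact absurd (Finset.mem_range.2 (by omega)) h
  refine ⟨hsumeq, hneg, fun hp => ?_⟩
  have := hp (Multiset.toFinsupp ({a, b} : Multiset ℕ))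
  rw [hsumeq] at this
  linarith


/-- let `n` be even and positive, and let `λ` be the two-part odd partition
`(n/2, n/2)` if `n/2` is odd and `(n/2+1, n/2-1)` if `n/2` is even.  Then for even `k` with
`1 < k < n/2`, the coefficient of `p_λ` in
`r_{Δ_{n,k}} = ∑_{i=0}^{k-1} (-1)^{k+i-1} q_{n-i} q_i` equals the coefficient of `p_λ` in
`-q_n`, which is negative; hence `r_{Δ_{n,k}}` is not `p`-positive. -/
theorem ribbonQ_delta_even_not_pPos (n k : ℕ) (hn : 0 < n) (hneven : Even n)
    (hkeven : Even k) (hk1 : 1 < k) (hk2 : k < n / 2) :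
    (coeff (Multiset.toFinsupp
        (if Odd (n / 2) then ({n / 2, n / 2} : Multiset ℕ) else {n / 2 + 1, n / 2 - 1}))
        (∑ i ∈ Finset.range k, (-1 : MvPolynomial ℕ ℚ) ^ (k + i - 1) * q (n - i) * q i) =
      coeff (Multiset.toFinsupp
        (if Odd (n / 2) then ({n / 2, n / 2} : Multiset ℕ) else {n / 2 + 1, n / 2 - 1}))
        (-(q n))) ∧
    coeff (Multiset.toFinsupp
        (if Odd (n / 2) then ({n / 2, n / 2} : Multiset ℕ) else {n / 2 + 1, n / 2 - 1}))
        (-(q n)) < 0 ∧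
    ¬ pPos (∑ i ∈ Finset.range k, (-1 : MvPolynomial ℕ ℚ) ^ (k + i - 1) * q (n - i) * q i) := by
  obtain ⟨c, hc⟩ := hneven
  by_cases h : Odd (n / 2)
  · simp only [if_pos h]
    exact master n k (n / 2) (n / 2) (by omega) h h hk2 hk2 hkeven hk1
  · simp only [if_neg h]
    have he : Even (n / 2) := Nat.not_odd_iff_even.1 h
    obtain ⟨d, hd⟩ := id he
    obtain ⟨e, hek⟩ := id hkeven
    refine master n k (n / 2 + 1) (n / 2 - 1) (by omega) ?_ ?_ (by omega) (by omega) hkeven hk1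
    · exact he.add_one
    · exact Nat.Even.sub_odd (by omega) he odd_one
end
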